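/- Let G be a finite connected k-regular simple graph with n vertices and m edges, where k ≥ 2. If λ ∈ ℂ is an eigenvalue of U⁺ (over ℂ), then λ = 1, or λ = −1, or there exists a (real) eigenvalue λ_A of the adjacency matrix A(G) such that λ² − λ_A·λ + k − 1 = 0, i.e., λ = λ_A/2 ± i√(k − 1 − λ_A²/4). (Membership form of Theorem 5.1.) -/
import Mathlib


open Matrix SimpleGraph Polynomial

/-- The transition matrix `U` (over `ℝ`) of the discrete-time quantum walk on `G`, indexed
by darts: `U e f = 2 / deg (t f)` if `t f = o e` and `f ≠ e⁻¹`, `U e f = 2 / deg (t f) - 1`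
if `f = e⁻¹`, and `0` otherwise. -/
noncomputable def quantumUR {V : Type*} [Fintype V] (G : SimpleGraph V)
    [DecidableRel G.Adj] [DecidableEq V] : Matrix G.Dart G.Dart ℝ :=
  fun e f =>
    if f.toProd.2 = e.toProd.1 ∧ f ≠ e.symm then (2 : ℝ) / (G.degree f.toProd.2 : ℝ)
    else if f = e.symm then (2 : ℝ) / (G.degree f.toProd.2 : ℝ) - 1
    else 0

/-- The positive support of a real matrix, viewed as a matrix over a semiring `R`:
entry `1` where the original entry is positive, `0` otherwise. -/
noncomputable def posSupport {α : Type*} (R : Type*) [Zero R] [One R]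
    (F : Matrix α α ℝ) : Matrix α α R :=
  fun i j => if 0 < F i j then 1 else 0

/-- From spectrum membership extract an eigenvector of the matrix. -/
lemma matrix_exists_eigvec {n K : Type*} [Fintype n] [DecidableEq n] [Field K]
    {M : Matrix n n K} {μ : K} (h : μ ∈ spectrum K M) :
    ∃ x : n → K, x ≠ 0 ∧ M.mulVec x = μ • x := by
  rw [← AlgEquiv.spectrum_eq (Matrix.toLinAlgEquiv' (n := n) (R := K)) M] at h
  obtain ⟨x, hx⟩ := (Module.End.hasEigenvalue_iff_mem_spectrum.mpr h).exists_hasEigenvector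
  refine ⟨x, hx.2, ?_⟩
  have := hx.apply_eq_smul
  rwa [Matrix.toLinAlgEquiv'_apply] at this

/-- Conversely, an eigenvector witnesses spectrum membership. -/
lemma matrix_mem_spectrum_of_eigvec {n K : Type*} [Fintype n] [DecidableEq n] [Field K]
    {M : Matrix n n K} {μ : K} (x : n → K) (hx : x ≠ 0) (h : M.mulVec x = μ • x) :
    μ ∈ spectrum K M := by
  rw [← AlgEquiv.spectrum_eq (Matrix.toLinAlgEquiv' (n := n) (R := K)) M]
  rw [← Module.End.hasEigenvalue_iff_mem_spectrum]
  exact Module.End.hasEigenvalue_of_hasEigenvector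
    ⟨Module.End.mem_eigenspace_iff.mpr (by rw [Matrix.toLinAlgEquiv'_apply, h]), hx⟩

theorem stmt11 {V : Type*} [Fintype V] [DecidableEq V] (G : SimpleGraph V)
    [DecidableRel G.Adj] (hconn : G.Connected) (k : ℕ)
    (hreg : G.IsRegularOfDegree k) (hk : 2 ≤ k)
    (lam : ℂ) (hlam : lam ∈ spectrum ℂ (posSupport ℂ (quantumUR G))) :
    lam = 1 ∨ lam = -1 ∨
      ∃ a : ℝ, a ∈ spectrum ℝ (G.adjMatrix ℝ) ∧
        lam ^ 2 - (a : ℂ) * lam + (k : ℂ) - 1 = 0 := by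
  classical
  obtain ⟨x, hx0, hxe⟩ := matrix_exists_eigvec hlam
  -- entries of the positive support
  have hM : ∀ e f : G.Dart, posSupport ℂ (quantumUR G) e f
      = if f.toProd.2 = e.toProd.1 ∧ f ≠ e.symm then 1 else 0 := by
    intro e f
    have hdeg : (G.degree f.toProd.2 : ℝ) = (k : ℝ) := by rw [hreg f.toProd.2]
    have hk0 : (0 : ℝ) < (k : ℝ) := by
      have : (0 : ℕ) < k := lt_of_lt_of_le two_pos hk
      exact_mod_cast this
    have hq : quantumUR G e f
        = if f.toProd.2 = e.toProd.1 ∧ f ≠ e.symm then (2 : ℝ) / (k : ℝ)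
          else if f = e.symm then (2 : ℝ) / (k : ℝ) - 1 else 0 := by
      simp only [quantumUR, hdeg]
    show (if 0 < quantumUR G e f then (1 : ℂ) else 0) = _
    rw [hq]
    by_cases h1 : f.toProd.2 = e.toProd.1 ∧ f ≠ e.symm
    · rw [if_pos h1, if_pos h1, if_pos (div_pos two_pos hk0)]
    · rw [if_neg h1, if_neg h1]
      by_cases h2 : f = e.symm
      · rw [if_pos h2, if_neg]
        rw [not_lt, sub_nonpos, div_le_one hk0]
        exact_mod_cast hk
      · rw [if_neg h2, if_neg (lt_irrefl 0)]
  -- the vertex function y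
  set S : V → Finset G.Dart := fun v => Finset.univ.filter (fun e : G.Dart => e.toProd.2 = v)
    with hS
  set y : V → ℂ := fun v => ∑ e ∈ S v, x e with hy
  have hmemS : ∀ (v : V) (e : G.Dart), e ∈ S v ↔ e.toProd.2 = v := by
    intro v e
    simp [hS]
  -- basic eigen-equation per dart
  have h1 : ∀ e : G.Dart, lam * x e = y e.toProd.1 - x e.symm := by
    intro e
    have hme := congrFun hxe e
    have hsymm_mem : e.symm ∈ S e.toProd.1 := (hmemS _ _).mpr rfl
    have hrw : (posSupport ℂ (quantumUR G)).mulVec x e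
        = ∑ f ∈ (S e.toProd.1).erase e.symm, x f := by
      rw [Matrix.mulVec]
      simp only [dotProduct, hM, ite_mul, one_mul, zero_mul]
      rw [← Finset.sum_filter]
      congr 1
      ext f
      simp only [Finset.mem_filter, Finset.mem_univ, true_and, Finset.mem_erase, hmemS]
      tauto
    rw [hrw, Finset.sum_erase_eq_sub hsymm_mem] at hme
    have := hme.symm
    simpa [hy, Pi.smul_apply, smul_eq_mul] using this
  have hsfst : ∀ e : G.Dart, e.symm.toProd.1 = e.toProd.2 := fun e => rfl
  -- squared eigen-equation per dart
  have h2 : ∀ e : G.Dart, lam ^ 2 * x e = lam * y e.toProd.1 - y e.toProd.2 + x e := by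
    intro e
    have ha := h1 e
    have hb := h1 e.symm
    rw [Dart.symm_symm, hsfst e] at hb
    linear_combination lam * ha - hb
  -- bijection between S v and neighbors
  have hsum_fst : ∀ (v : V) (g : V → ℂ),
      ∑ e ∈ S v, g e.toProd.1 = ∑ u ∈ G.neighborFinset v, g u := by
    intro v g
    refine Finset.sum_bij' (fun e _ => e.toProd.1)
      (fun u hu => ⟨(u, v), ((G.mem_neighborFinset v u).mp hu).symm⟩) ?_ ?_ ?_ ?_ ?_
    · intro e he
      rw [G.mem_neighborFinset]
      have he2 : e.toProd.2 = v := (hmemS _ _).mp he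
      have := e.adj
      rw [he2] at this
      exact this.symm
    · intro u hu
      exact (hmemS _ _).mpr rfl
    · intro e he
      have he2 : e.toProd.2 = v := (hmemS _ _).mp he
      subst he2
      exact Dart.ext _ _ rfl
    · intro u hu
      rfl
    · intro e he
      rfl
  have hcard : ∀ v : V, (S v).card = k := by
    intro v
    have hb : ∑ e ∈ S v, (1 : ℂ) = ∑ _u ∈ G.neighborFinset v, (1 : ℂ) := hsum_fst v (fun _ => 1)
    simp only [Finset.sum_const, nsmul_eq_mul, mul_one] at hb
    have : (S v).card = (G.neighborFinset v).card := by exact_mod_cast hb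
    rw [this, G.card_neighborFinset_eq_degree, hreg v]
  -- constant sums over the fiber
  have hBsum : ∀ (v : V) (g : V → ℂ), ∑ e ∈ S v, g e.toProd.2 = (k : ℂ) * g v := by
    intro v g
    have : ∀ e ∈ S v, g e.toProd.2 = g v := fun e he => by rw [(hmemS _ _).mp he]
    rw [Finset.sum_congr rfl this, Finset.sum_const, hcard v, nsmul_eq_mul]
  -- summed equation
  have hstar : ∀ v : V, lam ^ 2 * y v
      = lam * ((G.adjMatrix ℂ).mulVec y v) - (k : ℂ) * y v + y v := by
    intro v
    have hsum : ∑ e ∈ S v, lam ^ 2 * x e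
        = ∑ e ∈ S v, (lam * y e.toProd.1 - y e.toProd.2 + x e) :=
      Finset.sum_congr rfl fun e _ => h2 e
    rw [Finset.sum_add_distrib, Finset.sum_sub_distrib, ← Finset.mul_sum, ← Finset.mul_sum,
      hsum_fst v y, hBsum v y] at hsum
    rw [G.adjMatrix_mulVec_apply]
    exact hsum
  by_cases hy0 : y = 0
  · -- y = 0 case: lam = ±1
    obtain ⟨e, he⟩ := Function.ne_iff.mp hx0
    have he' : x e ≠ 0 := by simpa using he
    have ha := h1 e
    have hb := h1 e.symm
    rw [Dart.symm_symm, hsfst e] at hb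
    rw [hy0] at ha hb
    simp only [Pi.zero_apply, zero_sub] at ha hb
    have hsq : (lam - 1) * (lam + 1) * x e = 0 := by linear_combination lam * ha - hb
    rcases mul_eq_zero.mp hsq with h | h
    · rcases mul_eq_zero.mp h with h' | h'
      · exact Or.inl (sub_eq_zero.mp h')
      · exact Or.inr (Or.inl (eq_neg_of_add_eq_zero_left h'))
    · exact absurd h he'
  · -- y ≠ 0 case
    right; right
    have hk1 : ((k : ℂ) - 1) ≠ 0 := by
      rw [sub_ne_zero]
      intro h
      have : k = 1 := by exact_mod_cast h
      omega
    have hlam0 : lam ≠ 0 := by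
      intro h0
      apply hy0
      have hx' : ∀ e : G.Dart, x e = y e.toProd.2 := by
        intro e
        have hb := h1 e.symm
        rw [Dart.symm_symm, hsfst e, h0, zero_mul] at hb
        linear_combination hb
      funext v
      have hv : y v = (k : ℂ) * y v := by
        calc y v = ∑ e ∈ S v, x e := rfl
          _ = ∑ e ∈ S v, y e.toProd.2 := Finset.sum_congr rfl fun e _ => hx' e
          _ = (k : ℂ) * y v := hBsum v y
      have hz : ((k : ℂ) - 1) * y v = 0 := by linear_combination -hv
      have := (mul_eq_zero.mp hz).resolve_left hk1
      simpa using this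
    set μ : ℂ := (lam ^ 2 + (k : ℂ) - 1) / lam with hμ
    have heig : (G.adjMatrix ℂ).mulVec y = μ • y := by
      funext v
      have hmul : lam * ((G.adjMatrix ℂ).mulVec y v) = (lam ^ 2 + (k : ℂ) - 1) * y v := by
        linear_combination -hstar v
      rw [Pi.smul_apply, smul_eq_mul, hμ, div_mul_eq_mul_div, eq_div_iff hlam0]
      linear_combination hmul
    -- conjugate symmetry: μ is real
    obtain ⟨v0, hv0'⟩ := Function.ne_iff.mp hy0
    have hv0 : y v0 ≠ 0 := by simpa using hv0'
    set c : ℂ := ∑ v, (starRingEnd ℂ) (y v) * y v with hc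
    have hcre : c = ((∑ v, Complex.normSq (y v) : ℝ) : ℂ) := by
      rw [hc, Complex.ofReal_sum]
      exact Finset.sum_congr rfl fun v _ => Complex.normSq_eq_conj_mul_self.symm
    have hcne : c ≠ 0 := by
      rw [hcre, Ne, Complex.ofReal_eq_zero]
      have hpos : 0 < ∑ v, Complex.normSq (y v) :=
        Finset.sum_pos' (fun v _ => Complex.normSq_nonneg _)
          ⟨v0, Finset.mem_univ _, Complex.normSq_pos.mpr hv0⟩
      exact hpos.ne'
    have hcc : (starRingEnd ℂ) c = c := by rw [hcre, Complex.conj_ofReal]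
    have hs1 : ∑ v, (starRingEnd ℂ) (y v) * ((G.adjMatrix ℂ).mulVec y v) = μ * c := by
      rw [heig]
      simp only [Pi.smul_apply, smul_eq_mul]
      rw [hc, Finset.mul_sum]
      exact Finset.sum_congr rfl fun v _ => by ring
    have hexp : ∑ v, (starRingEnd ℂ) (y v) * ((G.adjMatrix ℂ).mulVec y v)
        = ∑ v, ∑ u, (if G.Adj v u then (starRingEnd ℂ) (y v) * y u else 0) := by
      refine Finset.sum_congr rfl fun v _ => ?_
      rw [Matrix.mulVec, dotProduct, Finset.mul_sum]
      refine Finset.sum_congr rfl fun u _ => ?_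
      rw [SimpleGraph.adjMatrix_apply]
      split_ifs <;> ring
    have hconjexp : (starRingEnd ℂ)
          (∑ v, ∑ u, (if G.Adj v u then (starRingEnd ℂ) (y v) * y u else 0))
        = ∑ v, ∑ u, (if G.Adj v u then (starRingEnd ℂ) (y v) * y u else 0) := by
      rw [map_sum]
      have hrow : ∀ v, (starRingEnd ℂ) (∑ u, (if G.Adj v u then (starRingEnd ℂ) (y v) * y u else 0))
          = ∑ u, (if G.Adj v u then y v * (starRingEnd ℂ) (y u) else 0) := by
        intro v
        rw [map_sum]
        refine Finset.sum_congr rfl fun u _ => ?_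
        rw [apply_ite (starRingEnd ℂ), _root_.map_mul, Complex.conj_conj, _root_.map_zero]
      refine Eq.trans (Finset.sum_congr rfl fun v _ => hrow v) ?_
      rw [Finset.sum_comm]
      refine Finset.sum_congr rfl fun a _ => Finset.sum_congr rfl fun b _ => ?_
      by_cases h : G.Adj a b
      · rw [if_pos h.symm, if_pos h]; ring
      · rw [if_neg (fun h' => h h'.symm), if_neg h]
    have hμreal : ((μ.re : ℝ) : ℂ) = μ := by
      have hTc : μ * c = ∑ v, ∑ u, (if G.Adj v u then (starRingEnd ℂ) (y v) * y u else 0) := by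
        rw [← hexp, hs1]
      have hconj := congrArg (starRingEnd ℂ) hTc
      rw [_root_.map_mul, hcc, hconjexp, ← hTc] at hconj
      exact Complex.conj_eq_iff_re.mp (mul_right_cancel₀ hcne hconj)
    set a : ℝ := μ.re with ha
    -- real eigenvectors
    have hAreal : ∀ v, ∑ u ∈ G.neighborFinset v, y u = ((a : ℂ)) * y v := by
      intro v
      have := congrFun heig v
      rw [G.adjMatrix_mulVec_apply, Pi.smul_apply, smul_eq_mul, ← hμreal] at this
      exact this
    have hre : (G.adjMatrix ℝ).mulVec (fun v => (y v).re) = a • (fun v => (y v).re) := by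
      funext v
      have h := congrArg Complex.re (hAreal v)
      rw [Complex.re_sum] at h
      rw [G.adjMatrix_mulVec_apply, Pi.smul_apply, smul_eq_mul]
      rw [h]
      simp [Complex.mul_re]
    have him : (G.adjMatrix ℝ).mulVec (fun v => (y v).im) = a • (fun v => (y v).im) := by
      funext v
      have h := congrArg Complex.im (hAreal v)
      rw [Complex.im_sum] at h
      rw [G.adjMatrix_mulVec_apply, Pi.smul_apply, smul_eq_mul]
      rw [h]
      simp [Complex.mul_im]
    have hw : (fun v => (y v).re) ≠ 0 ∨ (fun v => (y v).im) ≠ 0 := by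
      by_contra hcon
      push_neg at hcon
      obtain ⟨h1', h2'⟩ := hcon
      apply hv0
      have e1 := congrFun h1' v0
      have e2 := congrFun h2' v0
      simp only [Pi.zero_apply] at e1 e2
      exact Complex.ext e1 e2
    refine ⟨a, ?_, ?_⟩
    · rcases hw with h | h
      · exact matrix_mem_spectrum_of_eigvec _ h hre
      · exact matrix_mem_spectrum_of_eigvec _ h him
    · have hal : (a : ℂ) * lam = lam ^ 2 + (k : ℂ) - 1 := by
        rw [hμreal, hμ, div_mul_cancel₀ _ hlam0]
      linear_combination -hal
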